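/- Let m ≥ 3 be an integer and let n ≥ 10 be a natural number divisible by 4. Let K = {0} ∪ {2^l : 1 ≤ l ≤ m} ∪ {3·2^l : 1 ≤ l ≤ m−1}. Then the set { gcd(3·2^m, 3·2^{m−2}·(n−4) + k) : k ∈ K } has exactly 2m elements. -/

import Mathlib

/-!
Since `4 ∣ n - 4`, the shift `3·2^{m-2}(n-4)` is a multiple of `3·2^m`, so the Maslov number
attached to `k` is just `gcd(3·2^m, k)`. Every nonzero `k ∈ K` is a proper divisor of `3·2^m`, and
`k = 0` gives `3·2^m` itself, so `k ↦ gcd(3·2^m, k)` is injective on `K` and the count is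
`|K| = 1 + m + (m - 1)`.
-/

open Finset

lemma mul_two_pow_dvd_mul_two_pow_sub_two_mul_sub_four (c : ℕ) {m n : ℕ} (hm : 2 ≤ m)
    (h4 : 4 ∣ n) : c * 2 ^ m ∣ c * 2 ^ (m - 2) * (n - 4) := by
  have hpow : 2 ^ m = 2 ^ (m - 2) * 4 := by
    rw [show (4 : ℕ) = 2 ^ 2 by norm_num, ← pow_add, Nat.sub_add_cancel hm]
  rw [hpow, ← mul_assoc]
  exact mul_dvd_mul_left _ (Nat.dvd_sub h4 dvd_rfl)

lemma Nat.injOn_gcd_of_dvd_of_ne {N : ℕ} {K : Set ℕ}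
    (hK : ∀ k ∈ K, k ≠ 0 → k ∣ N ∧ k ≠ N) : Set.InjOn (Nat.gcd N) K := by
  have gcd_eq : ∀ k ∈ K, k ≠ 0 → Nat.gcd N k = k := fun k hk hk0 =>
    Nat.gcd_eq_right (hK k hk hk0).1
  intro x hx y hy h
  rcases eq_or_ne x 0 with rfl | hx0 <;> rcases eq_or_ne y 0 with rfl | hy0
  · rfl
  · rw [Nat.gcd_zero_right, gcd_eq y hy hy0] at h
    exact absurd h.symm (hK y hy hy0).2
  · rw [Nat.gcd_zero_right, gcd_eq x hx hx0] at h
    exact absurd h (hK x hx hx0).2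
  · rwa [gcd_eq x hx hx0, gcd_eq y hy hy0] at h

lemma two_pow_ne_three_mul_two_pow (l j : ℕ) : 2 ^ l ≠ 3 * 2 ^ j := by
  intro h
  have h3 : 3 ∣ 2 ^ l := h ▸ dvd_mul_right 3 (2 ^ j)
  have := Nat.le_of_dvd two_pos (Nat.prime_three.dvd_of_dvd_pow h3)
  omega

lemma three_mul_two_pow_injective : Function.Injective (fun l : ℕ => 3 * 2 ^ l) := fun _ _ h =>
  Nat.pow_right_injective le_rfl (Nat.eq_of_mul_eq_mul_left three_pos h)

section MaslovShifts

variable (m : ℕ)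

lemma card_maslovShifts :
    (({0} : Finset ℕ) ∪ (Icc 1 m).image (fun l => 2 ^ l)
      ∪ (Icc 1 (m - 1)).image (fun l => 3 * 2 ^ l)).card = 1 + m + (m - 1) := by
  have hdisj₁ : Disjoint ({0} : Finset ℕ) ((Icc 1 m).image (fun l => 2 ^ l)) := by
    simp [Finset.disjoint_singleton_left]
  have hdisj₂ : Disjoint ({0} ∪ (Icc 1 m).image (fun l => 2 ^ l))
      ((Icc 1 (m - 1)).image (fun l => 3 * 2 ^ l)) := by
    simp only [Finset.disjoint_left, mem_union, mem_singleton, mem_image]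
    rintro _ (rfl | ⟨l, -, rfl⟩) ⟨j, -, hj⟩
    · exact (by positivity : 0 < 3 * 2 ^ j).ne' hj
    · exact two_pow_ne_three_mul_two_pow l j hj.symm
  rw [card_union_of_disjoint hdisj₂, card_union_of_disjoint hdisj₁, card_singleton,
    card_image_of_injective _ (Nat.pow_right_injective le_rfl),
    card_image_of_injective _ three_mul_two_pow_injective, Nat.card_Icc, Nat.card_Icc]
  omega

lemma dvd_and_ne_of_mem_maslovShifts (hm : 1 ≤ m) :
    ∀ k ∈ ({0} : Finset ℕ) ∪ (Icc 1 m).image (fun l => 2 ^ l)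
        ∪ (Icc 1 (m - 1)).image (fun l => 3 * 2 ^ l),
      k ≠ 0 → k ∣ 3 * 2 ^ m ∧ k ≠ 3 * 2 ^ m := by
  intro k hk hk0
  simp only [mem_union, mem_singleton, mem_image, mem_Icc] at hk
  rcases hk with (rfl | ⟨l, ⟨-, hlm⟩, rfl⟩) | ⟨l, ⟨-, hlm⟩, rfl⟩
  · exact absurd rfl hk0
  · exact ⟨(Nat.pow_dvd_pow 2 hlm).mul_left 3, two_pow_ne_three_mul_two_pow l m⟩
  · refine ⟨mul_dvd_mul_left 3 (Nat.pow_dvd_pow 2 (by omega)), fun h => ?_⟩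
    have := three_mul_two_pow_injective h
    omega

end MaslovShifts

theorem stmt13 (m n : ℕ) (hm : 3 ≤ m) (h4 : 4 ∣ n) :
    ((({0} : Finset ℕ) ∪ (Finset.Icc 1 m).image (fun l => 2 ^ l)
        ∪ (Finset.Icc 1 (m - 1)).image (fun l => 3 * 2 ^ l)).image
      (fun k => Nat.gcd (3 * 2 ^ m) (3 * 2 ^ (m - 2) * (n - 4) + k))).card = 2 * m := by
  have hshift : ∀ k, Nat.gcd (3 * 2 ^ m) (3 * 2 ^ (m - 2) * (n - 4) + k)
      = Nat.gcd (3 * 2 ^ m) k := fun k =>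
    Nat.gcd_add_left_right_of_dvd k
      (mul_two_pow_dvd_mul_two_pow_sub_two_mul_sub_four 3 (by omega) h4)
  simp only [hshift]
  rw [card_image_of_injOn (Nat.injOn_gcd_of_dvd_of_ne
      (dvd_and_ne_of_mem_maslovShifts m (by omega))), card_maslovShifts]
  omega
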